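/- Quasipattern quadratic identity (first identity of the D12 proposition): for every integer n there exist real constants c_1, c_2, c_3 (depending only on n) such that for every real r, Σ_{i+j=n} b_i b_j J_{3i}(r) J_{3j}(r) = (1/3)·b_n·J_{−3n}(r) + (1/6)·b_n·J_{3n}(2r) + c_1·J_{3n}(√2·r) + c_2·J_{3n}(√(2+√3)·r) + c_3·J_{3n}(√(2−√3)·r), where b_k = cos(kπ/4). -/

import Mathlib

/-
The `m`-th Fourier coefficient of the plane wave `x ↦ exp (i s cos (x + φ))` on `ℝ / 2πℤ` is
`exp (i m (φ + π / 2)) J_m(s)` (Jacobi–Anger), and the product of the plane waves with phases `δ`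
and `0` is the plane wave of amplitude `2 s cos (δ / 2)` and phase `δ / 2`. Parseval's identity
then turns the Fourier coefficient of the product into a convolution, giving Neumann's addition
theorem `∑ₖ e^{ikδ} J_k(s) J_{m-k}(s) = e^{imδ/2} J_m(2 s cos (δ / 2))`. Averaging it over
`δ, δ ± 2π/3` keeps only the indices `k ∈ 3ℤ`, because `1 + 2 cos (2πk/3)` is `3` or `0`.

Finally `b_i b_{n-i} = (b_n + cos (iπ/2 - nπ/4)) / 2`, and `cos (iπ/2 - nπ/4)` is a combination of
`e^{±i (3i) π/6}`, so the sum is a combination of the filtered addition theorem at `δ = 0, ±π/6`;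
the amplitudes `2 cos (π/12)`, `2 cos (π/4)`, `2 cos (5π/12)` that occur are `√(2 + √3)`, `√2`,
`√(2 - √3)`.
-/

/-- Bessel function of the first kind of integer order `n`, defined via the
Hansen--Bessel formula. -/
noncomputable def besselJ (n : ℤ) (r : ℝ) : ℝ :=
  ((2 * Real.pi : ℂ)⁻¹ * ∫ θ in (0:ℝ)..(2 * Real.pi),
    Complex.exp (Complex.I * ((r * Real.cos θ - (n : ℝ) * (θ + Real.pi / 2) : ℝ) : ℂ))).re

/-- Bessel coefficients of the twelve-fold quasipattern. -/
noncomputable def qpCoeff (k : ℤ) : ℝ := Real.cos ((k : ℝ) * Real.pi / 4)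

open Complex MeasureTheory AddCircle
open scoped Real ComplexConjugate

section Parseval

variable {T : ℝ} [Fact (0 < T)]

theorem hasSum_prod_fourierCoeff (f g : Lp ℂ 2 (haarAddCircle (T := T))) :
    HasSum (fun i ↦ conj (fourierCoeff f i) * fourierCoeff g i)
      (∫ t, conj (f t) * g t ∂haarAddCircle) := by
  simp_rw [mul_comm (conj _)]
  refine HasSum.congr_fun (fourierBasis.hasSum_inner_mul_inner f g) (fun n ↦ ?_)
  simp only [← fourierBasis_repr, HilbertBasis.repr_apply_apply, inner_conj_symm,
    mul_comm (inner ℂ f _)]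

theorem fourierCoeff_star_mul_fourier (G : C(AddCircle T, ℂ)) (n k : ℤ) :
    fourierCoeff (⇑(star G * fourier n : C(AddCircle T, ℂ))) k
      = conj (fourierCoeff G (n - k)) := by
  rw [fourierCoeff, fourierCoeff, ← integral_conj]
  refine integral_congr_ae (Filter.Eventually.of_forall fun t ↦ ?_)
  simp only [ContinuousMap.mul_apply, ContinuousMap.star_apply, smul_eq_mul, map_mul,
    ← fourier_neg, RCLike.star_def]
  rw [neg_neg, show n - k = -k + n by ring, fourier_add]
  ring

theorem hasSum_fourierCoeff_mul_fourierCoeff_sub (F G : C(AddCircle T, ℂ)) (n : ℤ) :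
    HasSum (fun k ↦ fourierCoeff F k * fourierCoeff G (n - k)) (fourierCoeff (⇑(F * G)) n) := by
  have h := hasSum_prod_fourierCoeff
    (ContinuousMap.toLp 2 haarAddCircle ℂ (star G * fourier n : C(AddCircle T, ℂ)))
    (ContinuousMap.toLp 2 haarAddCircle ℂ F)
  simp only [fourierCoeff_toLp, fourierCoeff_star_mul_fourier, Complex.conj_conj] at h
  convert h using 1
  · funext k; ring
  · rw [fourierCoeff]
    refine integral_congr_ae ?_
    filter_upwards [ContinuousMap.coeFn_toLp (p := 2) (𝕜 := ℂ) haarAddCircle (star G * fourier n),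
      ContinuousMap.coeFn_toLp (p := 2) (𝕜 := ℂ) haarAddCircle F] with t hG hF
    rw [hG, hF]
    simp only [ContinuousMap.mul_apply, ContinuousMap.star_apply, smul_eq_mul, map_mul,
      RCLike.star_def, Complex.conj_conj, ← fourier_neg]
    ring

end Parseval

theorem Function.Periodic.intervalIntegral_comp_sub_left {E : Type*} [NormedAddCommGroup E]
    [NormedSpace ℝ E] {f : ℝ → E} {T : ℝ} (hf : Function.Periodic f T) (c : ℝ) :
    ∫ x in (0 : ℝ)..T, f (c - x) = ∫ x in (0 : ℝ)..T, f x := by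
  rw [intervalIntegral.integral_comp_sub_left, sub_zero]
  simpa using hf.intervalIntegral_add_eq (c - T) 0

theorem one_add_two_mul_cos_int_mul_two_pi_div_three (k : ℤ) :
    1 + 2 * Real.cos (k * (2 * π / 3)) = if 3 ∣ k then 3 else 0 := by
  have hk : (k : ℝ) * (2 * π / 3) = (k % 3 : ℤ) * (2 * π / 3) + (k / 3 : ℤ) * (2 * π) := by
    conv_lhs => rw [← Int.emod_add_mul_ediv k 3]
    push_cast; ring
  rw [hk, Real.cos_add_int_mul_two_pi]
  simp only [Int.dvd_iff_emod_eq_zero]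
  rcases (by omega : k % 3 = 0 ∨ k % 3 = 1 ∨ k % 3 = 2) with h | h | h <;> simp only [h]
  · norm_num
  · rw [if_neg one_ne_zero, show ((1 : ℤ) : ℝ) * (2 * π / 3) = π - π / 3 by push_cast; ring,
      Real.cos_pi_sub, Real.cos_pi_div_three]
    norm_num
  · rw [if_neg two_ne_zero, show ((2 : ℤ) : ℝ) * (2 * π / 3) = π / 3 + π by push_cast; ring,
      Real.cos_add_pi, Real.cos_pi_div_three]
    norm_num

theorem exp_add_exp_add_exp_two_pi_div_three (k : ℤ) (x : ℝ) :
    exp (I * k * x) + exp (I * k * (x + 2 * π / 3 : ℝ)) + exp (I * k * (x - 2 * π / 3 : ℝ))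
      = (if 3 ∣ k then 3 else 0) * exp (I * k * x) := by
  have hc : 1 + 2 * Complex.cos (k * (2 * π / 3)) = if 3 ∣ k then 3 else 0 := by
    have h := one_add_two_mul_cos_int_mul_two_pi_div_three k
    split_ifs at h ⊢ <;> exact_mod_cast h
  have hplus : exp (I * k * (x + 2 * π / 3 : ℝ)) = exp (I * k * x) * exp (k * (2 * π / 3) * I) := by
    rw [← Complex.exp_add]; congr 1; push_cast; ring
  have hminus : exp (I * k * (x - 2 * π / 3 : ℝ))
      = exp (I * k * x) * exp (-(k * (2 * π / 3)) * I) := by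
    rw [← Complex.exp_add]; congr 1; push_cast; ring
  rw [hplus, hminus, ← hc]
  linear_combination exp (I * k * x) * (Complex.two_cos (k * (2 * π / 3))).symm

theorem two_mul_cos_half {x : ℝ} (hl : -π ≤ x) (hr : x ≤ π) :
    2 * Real.cos (x / 2) = √(2 + 2 * Real.cos x) := by
  rw [Real.cos_half hl hr, show 2 + 2 * Real.cos x = 2 ^ 2 * ((1 + Real.cos x) / 2) by ring,
    Real.sqrt_mul (by norm_num), Real.sqrt_sq (by norm_num)]

theorem two_mul_cos_pi_div_twelve : 2 * Real.cos (π / 12) = √(2 + √3) := by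
  rw [show π / 12 = π / 6 / 2 by ring, two_mul_cos_half (by linarith [Real.pi_pos])
    (by linarith [Real.pi_pos]), Real.cos_pi_div_six]
  ring_nf

theorem two_mul_cos_five_pi_div_twelve : 2 * Real.cos (5 * π / 12) = √(2 - √3) := by
  rw [show 5 * π / 12 = (π - π / 6) / 2 by ring, two_mul_cos_half (by linarith [Real.pi_pos])
    (by linarith [Real.pi_pos]), Real.cos_pi_sub, Real.cos_pi_div_six]
  ring_nf

theorem two_mul_cos_pi_div_four : 2 * Real.cos (π / 4) = √2 := by
  rw [Real.cos_pi_div_four]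
  ring

noncomputable def hansenIntegrand (n : ℤ) (r θ : ℝ) : ℂ :=
  exp (I * ((r * Real.cos θ - (n : ℝ) * (θ + π / 2) : ℝ) : ℂ))

theorem hansenIntegrand_periodic (n : ℤ) (r : ℝ) :
    Function.Periodic (hansenIntegrand n r) (2 * π) := fun θ ↦
  exp_eq_exp_iff_exists_int.mpr ⟨-n, by rw [Real.cos_add_two_pi]; push_cast; ring⟩

theorem conj_hansenIntegrand (n : ℤ) (r θ : ℝ) :
    conj (hansenIntegrand n r θ) = hansenIntegrand n r (π - θ) := by
  rw [hansenIntegrand, hansenIntegrand, ← exp_conj]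
  exact exp_eq_exp_iff_exists_int.mpr ⟨n, by
    rw [Real.cos_pi_sub]; simp only [map_mul, conj_I, conj_ofReal]; push_cast; ring⟩

theorem hansenIntegrand_neg (n : ℤ) (r θ : ℝ) :
    hansenIntegrand (-n) r θ = (-1 : ℂ) ^ n * hansenIntegrand n r (0 - θ) := by
  rw [hansenIntegrand, hansenIntegrand, ← exp_pi_mul_I, ← exp_int_mul, ← exp_add]
  exact exp_eq_exp_iff_exists_int.mpr ⟨0, by rw [zero_sub, Real.cos_neg]; push_cast; ring⟩

theorem ofReal_besselJ (n : ℤ) (r : ℝ) :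
    (besselJ n r : ℂ) = (2 * π : ℂ)⁻¹ * ∫ θ in (0 : ℝ)..2 * π, hansenIntegrand n r θ := by
  set z := (2 * π : ℂ)⁻¹ * ∫ θ in (0 : ℝ)..2 * π, hansenIntegrand n r θ
  have hz : conj z = z := by
    simp only [z, map_mul, ← intervalIntegral.intervalIntegral_conj, conj_hansenIntegrand,
      (hansenIntegrand_periodic n r).intervalIntegral_comp_sub_left, map_inv₀, conj_ofReal,
      map_ofNat]
  -- `besselJ n r` is `z.re` by definition
  exact conj_eq_iff_re.mp hz

theorem besselJ_neg (n : ℤ) (r : ℝ) : besselJ (-n) r = (-1 : ℝ) ^ n * besselJ n r := by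
  have h : (besselJ (-n) r : ℂ) = (-1 : ℂ) ^ n * besselJ n r := by
    simp only [ofReal_besselJ, hansenIntegrand_neg, intervalIntegral.integral_const_mul,
      (hansenIntegrand_periodic n r).intervalIntegral_comp_sub_left]
    ring
  apply ofReal_injective
  push_cast
  exact h

instance : Fact (0 < 2 * π) := ⟨Real.two_pi_pos⟩

noncomputable def planeWave (s φ : ℝ) : C(AddCircle (2 * π), ℂ) where
  toFun x := exp (I * s * (exp (φ * I) * fourier 1 x).re)
  continuous_toFun := by fun_prop

theorem planeWave_coe (s φ x : ℝ) :
    planeWave s φ x = exp (I * (s * Real.cos (x + φ) : ℝ)) := by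
  have hx : (fourier 1 (x : AddCircle (2 * π)) : ℂ) = exp (x * I) := by
    rw [fourier_coe_apply]
    congr 1
    field_simp
    push_cast
    ring
  simp only [planeWave, ContinuousMap.coe_mk, hx, ← Complex.exp_add, ← add_mul, ← ofReal_add,
    exp_ofReal_mul_I_re, add_comm φ]
  push_cast
  ring_nf

theorem fourierCoeff_planeWave (s φ : ℝ) (m : ℤ) :
    fourierCoeff (planeWave s φ) m = exp (I * m * (φ + π / 2)) * besselJ m s := by
  have h (x : ℝ) : fourier (-m) (x : AddCircle (2 * π)) • planeWave s φ x
      = exp (I * m * (φ + π / 2)) * hansenIntegrand m s (x + φ) := by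
    rw [fourier_coe_apply, planeWave_coe, hansenIntegrand, smul_eq_mul, ← Complex.exp_add,
      ← Complex.exp_add]
    congr 1
    field_simp
    push_cast
    ring
  rw [fourierCoeff_eq_intervalIntegral _ m (-φ), ofReal_besselJ]
  simp_rw [h]
  rw [intervalIntegral.integral_const_mul, intervalIntegral.integral_comp_add_right]
  simp only [neg_add_cancel, neg_add_cancel_comm, real_smul, ofReal_div, ofReal_one]
  push_cast
  field_simp

theorem planeWave_mul_planeWave (s δ : ℝ) :
    planeWave s δ * planeWave s 0 = planeWave (2 * Real.cos (δ / 2) * s) (δ / 2) := by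
  ext x
  induction x using QuotientAddGroup.induction_on with
  | H x =>
    rw [ContinuousMap.mul_apply]
    simp only [planeWave_coe, ← Complex.exp_add]
    have h := Real.cos_add_cos (x + δ) (x + 0)
    rw [show (x + δ + (x + 0)) / 2 = x + δ / 2 by ring, show (x + δ - (x + 0)) / 2 = δ / 2 by ring]
      at h
    rw [← mul_add, ← ofReal_add]
    congr 3
    linear_combination s * h

theorem hasSum_besselJ_mul_besselJ (s δ : ℝ) (m : ℤ) :
    HasSum (fun k : ℤ ↦ exp (I * k * δ) * besselJ k s * besselJ (m - k) s)
      (exp (I * m * (δ / 2)) * besselJ m (2 * Real.cos (δ / 2) * s)) := by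
  have h := hasSum_fourierCoeff_mul_fourierCoeff_sub (planeWave s δ) (planeWave s 0) m
  rw [planeWave_mul_planeWave] at h
  simp only [fourierCoeff_planeWave] at h
  have hv : exp (I * m * ((δ / 2 : ℝ) + π / 2))
      = exp (I * m * (π / 2)) * exp (I * m * (δ / 2)) := by
    rw [← Complex.exp_add]; congr 1; push_cast; ring
  rw [hv, mul_assoc] at h
  rw [← hasSum_mul_left_iff (exp_ne_zero (I * m * (π / 2)))]
  refine h.congr_fun fun k ↦ ?_
  have hk : exp (I * k * (δ + π / 2)) * exp (I * ((m - k : ℤ) : ℂ) * ((0 : ℝ) + π / 2))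
      = exp (I * m * (π / 2)) * exp (I * k * δ) := by
    rw [← Complex.exp_add, ← Complex.exp_add]; congr 1; push_cast; ring
  linear_combination (-(besselJ k s * besselJ (m - k) s : ℂ)) * hk

theorem hasSum_besselJ_three_mul_mul_besselJ (s θ : ℝ) (n : ℤ) :
    HasSum (fun i : ℤ ↦ exp (I * (3 * i : ℤ) * (2 * θ : ℝ)) * besselJ (3 * i) s
        * besselJ (3 * (n - i)) s)
      (1 / 3 * (exp (I * (3 * n : ℤ) * θ) * besselJ (3 * n) (2 * Real.cos θ * s)
        + exp (I * (3 * n : ℤ) * θ) * (-1) ^ n * besselJ (3 * n) (2 * Real.cos (θ + π / 3) * s)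
        + exp (I * (3 * n : ℤ) * θ) * (-1) ^ n * besselJ (3 * n) (2 * Real.cos (θ - π / 3) * s)))
    := by
  have h := ((hasSum_besselJ_mul_besselJ s (2 * θ) (3 * n)).add
    (hasSum_besselJ_mul_besselJ s (2 * θ + 2 * π / 3) (3 * n))).add
    (hasSum_besselJ_mul_besselJ s (2 * θ - 2 * π / 3) (3 * n))
  have hterm (k : ℤ) : exp (I * k * (2 * θ : ℝ)) * besselJ k s * besselJ (3 * n - k) s
      + exp (I * k * (2 * θ + 2 * π / 3 : ℝ)) * besselJ k s * besselJ (3 * n - k) s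
      + exp (I * k * (2 * θ - 2 * π / 3 : ℝ)) * besselJ k s * besselJ (3 * n - k) s
      = (if 3 ∣ k then 3 else 0 : ℂ)
        * (exp (I * k * (2 * θ : ℝ)) * besselJ k s * besselJ (3 * n - k) s) := by
    linear_combination (besselJ k s * besselJ (3 * n - k) s : ℂ) *
      exp_add_exp_add_exp_two_pi_div_three k (2 * θ)
  have hneg : ((-1 : ℂ)) ^ n = exp (I * n * π) := by
    rw [← exp_pi_mul_I, ← exp_int_mul]; ring_nf
  have hplus : exp (I * (3 * n : ℤ) * ((2 * θ + 2 * π / 3 : ℝ) / 2))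
      = exp (I * (3 * n : ℤ) * θ) * (-1) ^ n := by
    rw [hneg, ← Complex.exp_add]; congr 1; push_cast; ring
  have hminus : exp (I * (3 * n : ℤ) * ((2 * θ - 2 * π / 3 : ℝ) / 2))
      = exp (I * (3 * n : ℤ) * θ) * (-1) ^ n := by
    rw [hneg, ← Complex.exp_add]
    exact exp_eq_exp_iff_exists_int.mpr ⟨-n, by push_cast; ring⟩
  rw [hplus, hminus, show (2 * θ + 2 * π / 3) / 2 = θ + π / 3 by ring,
    show (2 * θ - 2 * π / 3) / 2 = θ - π / 3 by ring, show 2 * θ / 2 = θ by ring,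
    show ((2 * θ : ℝ) : ℂ) / 2 = θ by push_cast; ring] at h
  simp only [hterm] at h
  have h3 := (Function.Injective.hasSum_iff (g := fun i : ℤ ↦ 3 * i)
    (mul_right_injective₀ three_ne_zero) fun k hk ↦ ?_).mpr h
  · refine (h3.mul_left (1 / 3)).congr_fun fun i ↦ ?_
    simp only [Function.comp_apply, if_pos (dvd_mul_right 3 i), mul_sub]
    ring
  · rw [if_neg fun ⟨i, hi⟩ ↦ hk ⟨i, hi.symm⟩, zero_mul]

theorem qpCoeff_mul_qpCoeff_sub (n i : ℤ) :
    qpCoeff i * qpCoeff (n - i) = (qpCoeff n + Real.cos (i * (π / 2) - n * (π / 4))) / 2 := by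
  simp only [qpCoeff]
  push_cast
  rw [show n * π / 4 = i * π / 4 + (n - i) * π / 4 by ring,
    show i * (π / 2) - n * (π / 4) = i * π / 4 - (n - i) * π / 4 by ring, Real.cos_add,
    Real.cos_sub]
  ring

theorem hasSum_qpCoeff_mul_besselJ_mul_besselJ (n : ℤ) (r : ℝ) :
    HasSum (fun i : ℤ ↦ qpCoeff i * qpCoeff (n - i) * besselJ (3 * i) r * besselJ (3 * (n - i)) r)
      (1 / 3 * qpCoeff n * besselJ (-(3 * n)) r + 1 / 6 * qpCoeff n * besselJ (3 * n) (2 * r)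
        + (-1) ^ n / 6 * besselJ (3 * n) (√2 * r)
        + 1 / 6 * besselJ (3 * n) (√(2 + √3) * r)
        + (-1) ^ n / 6 * besselJ (3 * n) (√(2 - √3) * r)) := by
  have h₀ := hasSum_besselJ_three_mul_mul_besselJ r 0 n
  rw [mul_zero, Real.cos_zero, zero_add, zero_sub, Real.cos_neg, Real.cos_pi_div_three,
    show (2 : ℝ) * 1 * r = 2 * r by ring, show (2 : ℝ) * (1 / 2) * r = r by ring] at h₀
  simp only [ofReal_zero, mul_zero, exp_zero, one_mul] at h₀
  have h₁ := hasSum_besselJ_three_mul_mul_besselJ r (π / 12) n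
  rw [show π / 12 + π / 3 = 5 * π / 12 by ring, show π / 12 - π / 3 = -(π / 4) by ring,
    Real.cos_neg, two_mul_cos_pi_div_twelve, two_mul_cos_five_pi_div_twelve,
    two_mul_cos_pi_div_four] at h₁
  have h₂ := hasSum_besselJ_three_mul_mul_besselJ r (-(π / 12)) n
  rw [show -(π / 12) + π / 3 = π / 4 by ring, show -(π / 12) - π / 3 = -(5 * π / 12) by ring,
    Real.cos_neg, Real.cos_neg, two_mul_cos_pi_div_twelve, two_mul_cos_five_pi_div_twelve,
    two_mul_cos_pi_div_four] at h₂
  set ζ := exp (I * (3 * n : ℤ) * (π / 12 : ℝ))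
  set ζ' := exp (I * (3 * n : ℤ) * (-(π / 12) : ℝ))
  have hζ : ζ * ζ' = 1 := by
    rw [← Complex.exp_add, ← exp_zero]; congr 1; push_cast; ring
  have hsum := (h₀.mul_left ((qpCoeff n : ℂ) / 2)).add
    ((h₁.mul_left (ζ' / 4)).add (h₂.mul_left (ζ / 4)))
  rw [← Complex.hasSum_ofReal]
  refine (congrArg (HasSum _) ?_).mpr (hsum.congr_fun fun i ↦ ?_)
  · have hJ : (besselJ (-(3 * n)) r : ℂ) = (-1) ^ n * besselJ (3 * n) r := by
      rw [besselJ_neg, zpow_mul]; push_cast; norm_num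
    push_cast
    rw [hJ]
    linear_combination -(besselJ (3 * n) (√(2 + √3) * r) + (-1) ^ n * besselJ (3 * n) (√2 * r)
      + (-1) ^ n * besselJ (3 * n) (√(2 - √3) * r) : ℂ) / 6 * hζ
  · have hcos : (Real.cos (i * (π / 2) - n * (π / 4)) : ℂ)
        = (ζ' * exp (I * (3 * i : ℤ) * (2 * (π / 12) : ℝ))
          + ζ * exp (I * (3 * i : ℤ) * (2 * -(π / 12) : ℝ))) / 2 := by
      rw [ofReal_cos, Complex.cos, ← Complex.exp_add, ← Complex.exp_add]
      congr 2 <;> congr 1 <;> push_cast <;> ring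
    simp only [qpCoeff_mul_qpCoeff_sub, ofReal_mul, ofReal_div, ofReal_add, ofReal_ofNat, hcos]
    ring

/-- Quasipattern quadratic identity (first identity of the D12 proposition). -/
theorem quasipattern_quadratic_one (n : ℤ) :
    ∃ c₁ c₂ c₃ : ℝ, ∀ r : ℝ,
      Summable (fun i : ℤ =>
        qpCoeff i * qpCoeff (n - i) * besselJ (3 * i) r * besselJ (3 * (n - i)) r) ∧
      (∑' i : ℤ, qpCoeff i * qpCoeff (n - i) * besselJ (3 * i) r * besselJ (3 * (n - i)) r)
        = 1/3 * qpCoeff n * besselJ (-(3 * n)) r + 1/6 * qpCoeff n * besselJ (3 * n) (2 * r)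
          + c₁ * besselJ (3 * n) (Real.sqrt 2 * r)
          + c₂ * besselJ (3 * n) (Real.sqrt (2 + Real.sqrt 3) * r)
          + c₃ * besselJ (3 * n) (Real.sqrt (2 - Real.sqrt 3) * r) := by
  refine ⟨(-1) ^ n / 6, 1 / 6, (-1) ^ n / 6, fun r ↦ ?_⟩
  have h := hasSum_qpCoeff_mul_besselJ_mul_besselJ n r
  exact ⟨h.summable, h.tsum_eq⟩
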